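/- arXiv:2508.02457 — 7 statements merged into one kernel-verified Lean document; each statement's English description precedes it below -/
import Mathlib

section
/- Let k, n be natural numbers, let e : Fin k → ℤ, and let β : Fin n → ℝ with β j > 0 for every j. Then ∏_{i : Fin k} ( ∑_{j : Fin n} (β j)^(e i) ) = ∑_p ∑_φ ∏_{q ∈ p.parts} (β (φ q))^(∑_{i ∈ q} e i), where the outer sum runs over all finpartitions p of the full finset of Fin k, the inner sum runs over all injective functions φ from the set of parts of p to Fin n, and all powers are integer powers (zpow). -/
/-!
Expanding the product gives `∑_f ∏_i β (f i) ^ e i` over all maps `f : Fin k → Fin n`. A map `f`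
is the same thing as the partition `p` of `Fin k` into the nonempty fibres of `f` together with
the injective map `φ` it induces on the parts of `p`: conversely `f = φ ∘ p.partOf`. Grouping the
factors of `∏_i β (f i) ^ e i` along the parts of `p` then adds up the exponents within each part,
which is legitimate for zpow because `β` does not vanish.
-/

open Finset Function

namespace Finpartition

variable {ι κ : Type*} [Fintype ι] [DecidableEq ι]

def partOf (P : Finpartition (univ : Finset ι)) (i : ι) : P.parts :=
  ⟨P.part i, P.part_mem.2 (mem_univ i)⟩

lemma partOf_eq_iff (P : Finpartition (univ : Finset ι)) {i : ι} {q : P.parts} :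
    P.partOf i = q ↔ i ∈ (q : Finset ι) :=
  Subtype.ext_iff.trans (P.part_eq_iff_mem q.2)

lemma partOf_surjective (P : Finpartition (univ : Finset ι)) : Surjective P.partOf := fun q ↦
  let ⟨i, hi⟩ := P.nonempty_of_mem_parts q.2
  ⟨i, P.partOf_eq_iff.2 hi⟩

lemma partOf_eq_partOf_iff (P : Finpartition (univ : Finset ι)) {i j : ι} :
    P.partOf i = P.partOf j ↔ j ∈ P.part i :=
  Subtype.ext_iff.trans <|
    eq_comm.trans (P.mem_part_iff_part_eq_part (mem_univ j) (mem_univ i)).symm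

lemma ext_part {P Q : Finpartition (univ : Finset ι)} (h : ∀ i, P.part i = Q.part i) :
    P = Q := by
  have parts_eq_image (R : Finpartition (univ : Finset ι)) : R.parts = univ.image R.part := by
    ext t
    simp only [mem_image, mem_univ, true_and]
    exact ⟨fun ht ↦ ((R.partOf_surjective ⟨t, ht⟩).imp fun i hi ↦ congrArg Subtype.val hi),
      fun ⟨i, hi⟩ ↦ hi ▸ (R.partOf i).2⟩
  ext1
  rw [parts_eq_image, parts_eq_image, image_congr fun i _ ↦ h i]

lemma ofSetoid_ker_comp_partOf [DecidableEq κ] (P : Finpartition (univ : Finset ι))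
    {φ : P.parts → κ} (hφ : Injective φ) : ofSetoid (Setoid.ker (φ ∘ P.partOf)) = P := by
  refine ext_part fun i ↦ Finset.ext fun j ↦ ?_
  rw [mem_part_ofSetoid_iff_rel, ← partOf_eq_partOf_iff]
  exact hφ.eq_iff

lemma exists_injective_comp_partOf [DecidableEq κ] (f : ι → κ) :
    ∃ φ : (ofSetoid (Setoid.ker f)).parts → κ,
      Injective φ ∧ φ ∘ (ofSetoid (Setoid.ker f)).partOf = f := by
  set P := ofSetoid (Setoid.ker f)
  have partOf_eq_iff_eq {i j : ι} : P.partOf i = P.partOf j ↔ f i = f j :=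
    P.partOf_eq_partOf_iff.trans mem_part_ofSetoid_iff_rel
  let rep := surjInv P.partOf_surjective
  have partOf_rep : ∀ q, P.partOf (rep q) = q := rightInverse_surjInv _
  refine ⟨f ∘ rep, fun q q' h ↦ ?_, funext fun i ↦ ?_⟩
  · rw [← partOf_rep q, ← partOf_rep q']
    exact partOf_eq_iff_eq.2 h
  · exact partOf_eq_iff_eq.1 (partOf_rep _)

lemma prod_comp_partOf {M : Type*} [CommMonoid M] (P : Finpartition (univ : Finset ι))
    (F : ι → P.parts → M) :
    ∏ i, F i (P.partOf i) = ∏ q ∈ P.parts.attach, ∏ i ∈ (q : Finset ι), F i q := by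
  rw [← univ_eq_attach, ← Finset.prod_fiberwise univ P.partOf]
  refine prod_congr rfl fun q _ ↦ ?_
  have fiber_eq : ({i | P.partOf i = q} : Finset ι) = q := by
    ext i
    simp [partOf_eq_iff]
  rw [fiber_eq]
  exact prod_congr rfl fun i hi ↦ by rw [P.partOf_eq_iff.2 hi]

theorem sum_pi_eq_sum_finpartition_sum_injective {M : Type*} [AddCommMonoid M] [Fintype κ]
    [DecidableEq κ] (h : (ι → κ) → M) :
    ∑ f, h f = ∑ P : Finpartition (univ : Finset ι),
      ∑ φ ∈ univ.filter (fun φ : P.parts → κ ↦ Injective φ), h (φ ∘ P.partOf) := by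
  rw [← Finset.sum_fiberwise univ (fun f ↦ ofSetoid (Setoid.ker f))]
  refine sum_congr rfl fun P _ ↦ (sum_bij (fun φ _ ↦ φ ∘ P.partOf) ?_ ?_ ?_ fun _ _ ↦ rfl).symm
  · intro φ hφ
    simp only [mem_filter, mem_univ, true_and] at hφ ⊢
    exact ofSetoid_ker_comp_partOf P hφ
  · exact fun φ _ φ' _ ↦ P.partOf_surjective.injective_comp_right.eq_iff.1
  · intro f hf
    simp only [mem_filter, mem_univ, true_and, exists_prop] at hf ⊢
    subst hf
    exact exists_injective_comp_partOf f

theorem prod_sum_eq_sum_finpartition_sum_injective {R : Type*} [CommSemiring R] [Fintype κ]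
    [DecidableEq κ] (g : ι → κ → R) :
    ∏ i, ∑ j, g i j = ∑ P : Finpartition (univ : Finset ι),
      ∑ φ ∈ univ.filter (fun φ : P.parts → κ ↦ Injective φ),
        ∏ q ∈ P.parts.attach, ∏ i ∈ (q : Finset ι), g i (φ q) := by
  rw [prod_univ_sum, Fintype.piFinset_univ,
    sum_pi_eq_sum_finpartition_sum_injective fun f ↦ ∏ i, g i (f i)]
  simp_rw [comp_apply]
  exact sum_congr rfl fun P _ ↦ sum_congr rfl fun φ _ ↦ P.prod_comp_partOf fun i q ↦ g i (φ q)

end Finpartition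

lemma prod_zpow_eq_zpow_sum₀ {ι G₀ : Type*} [CommGroupWithZero G₀] {a : G₀} (ha : a ≠ 0)
    (s : Finset ι) (f : ι → ℤ) : ∏ i ∈ s, a ^ f i = a ^ ∑ i ∈ s, f i := by
  induction s using Finset.cons_induction with
  | empty => simp
  | cons i s hi ih => rw [prod_cons, sum_cons, zpow_add₀ ha, ih]

theorem product_of_power_sums_eq_sum_over_finpartitions
    (k n : ℕ) (e : Fin k → ℤ) (β : Fin n → ℝ) (hβ : ∀ j, 0 < β j) :
    ∏ i : Fin k, (∑ j : Fin n, β j ^ e i) =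
      ∑ p : Finpartition (Finset.univ : Finset (Fin k)),
        ∑ φ ∈ Finset.univ.filter (fun φ : ↥p.parts → Fin n => Function.Injective φ),
          ∏ q ∈ p.parts.attach, β (φ q) ^ (∑ i ∈ (q : Finset (Fin k)), e i) := by
  rw [Finpartition.prod_sum_eq_sum_finpartition_sum_injective fun i j ↦ β j ^ e i]
  refine sum_congr rfl fun p _ ↦ sum_congr rfl fun φ _ ↦ prod_congr rfl fun q _ ↦ ?_
  exact prod_zpow_eq_zpow_sum₀ (hβ _).ne' _ _
end

section
/- Let s be a finset in a type α with decidable equality. There is a bijection between (a) the set of pairs (q, ρ), where q is a finpartition of s and ρ is a finpartition of the finset q.parts (a finset in Finset α), and (b) the set of pairs (p, q), where p and q are finpartitions of s and q refines p. The bijection sends (q, ρ) to (p, q), where the parts of p are exactly the unions ⋃_{b ∈ B} b taken over the parts B of ρ. -/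
/-!
Fusing the blocks of `Q` along a partition `R` of `Q.parts` yields the coarsening with parts
`B.sup id`, `B ∈ R.parts`; conversely a coarsening `P` of `Q` groups the blocks of `Q` by the part
of `P` above them. The two constructions are inverse because a part `c` of `P` meets every block
of `Q` not below it in `⊥`, so `c` is the join of the blocks below it, and because the joins of
distinct parts of `R` are disjoint, so a block below `B.sup id` belongs to `B`.
-/

open Finset

namespace Finpartition

variable {α : Type*} [DistribLattice α] [OrderBot α] {a : α}

lemma sup_parts_filter_le [DecidableLE α] {P Q : Finpartition a} (h : Q ≤ P) {c : α}
    (hc : c ∈ P.parts) :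
    (Q.parts.filter (· ≤ c)).sup id = c := by
  refine le_antisymm (Finset.sup_le fun b hb => (mem_filter.mp hb).2) ?_
  calc c = c ⊓ Q.parts.sup id := by rw [Q.sup_parts, inf_of_le_left (P.le hc)]
    _ = Q.parts.sup (c ⊓ ·) := sup_inf_distrib_left _ _ _
    _ ≤ (Q.parts.filter (· ≤ c)).sup id := Finset.sup_le fun b hb => by
      by_cases hbc : b ≤ c
      · exact inf_le_right.trans (le_sup (f := id) (mem_filter.mpr ⟨hb, hbc⟩))
      obtain ⟨d, hd, hbd⟩ := h hb
      have hcd : c ≠ d := by rintro rfl; exact hbc hbd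
      exact ((P.disjoint hc hd hcd).mono_right hbd).eq_bot.le.trans bot_le

variable [DecidableEq α]

def fuse (P : Finpartition a) (R : Finpartition P.parts) : Finpartition a where
  parts := R.parts.image fun B => B.sup id
  supIndep := by
    rw [supIndep_iff_pairwiseDisjoint]
    intro _ hB' _ hC' hBC
    obtain ⟨B, hB, rfl⟩ := mem_image.mp hB'
    obtain ⟨C, hC, rfl⟩ := mem_image.mp hC'
    exact P.supIndep.disjoint_sup_sup (R.le hB) (R.le hC)
      (R.disjoint hB hC fun h => hBC (congrArg _ h))
  sup_parts := by
    rw [sup_image]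
    exact (sup_biUnion R.parts id).symm.trans (by rw [R.biUnion_parts, P.sup_parts])
  bot_notMem := by
    intro hbot
    obtain ⟨B, hB, hbot⟩ := mem_image.mp hbot
    obtain ⟨b, hb⟩ := R.nonempty_of_mem_parts hB
    exact P.ne_bot (R.le hB hb) (le_bot_iff.mp (hbot ▸ le_sup (f := id) hb))

lemma le_fuse (P : Finpartition a) (R : Finpartition P.parts) : P ≤ P.fuse R := by
  intro b hb
  obtain ⟨B, hB, hbB⟩ := R.exists_mem hb
  exact ⟨B.sup id, mem_image_of_mem _ hB, le_sup (f := id) hbB⟩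

variable [DecidableLE α]

lemma parts_filter_le_sup (P : Finpartition a) (R : Finpartition P.parts) {B : Finset α}
    (hB : B ∈ R.parts) : P.parts.filter (· ≤ B.sup id) = B := by
  ext b
  refine ⟨fun hb => ?_, fun hb => mem_filter.mpr ⟨R.le hB hb, le_sup (f := id) hb⟩⟩
  obtain ⟨hbP, hbB⟩ := mem_filter.mp hb
  obtain ⟨C, hC, hbC⟩ := R.exists_mem hbP
  have hCB : C = B := by
    by_contra hCB
    exact P.ne_bot hbP <| disjoint_self.mp <| (P.supIndep.disjoint_sup_sup (R.le hC) (R.le hB)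
      (R.disjoint hC hB hCB)).mono (le_sup (f := id) hbC) hbB
  exact hCB ▸ hbC

def unfuse {P Q : Finpartition a} (h : Q ≤ P) : Finpartition Q.parts where
  parts := P.parts.image fun c => Q.parts.filter (· ≤ c)
  supIndep := by
    rw [supIndep_iff_pairwiseDisjoint]
    intro _ hc' _ hd' hcd
    obtain ⟨c, hc, rfl⟩ := mem_image.mp hc'
    obtain ⟨d, hd, rfl⟩ := mem_image.mp hd'
    refine disjoint_left.mpr fun b hbc hbd => Q.ne_bot (mem_filter.mp hbc).1 ?_
    exact disjoint_self.mp <| (P.disjoint hc hd fun h => hcd (by rw [h])).mono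
      (mem_filter.mp hbc).2 (mem_filter.mp hbd).2
  sup_parts := by
    refine le_antisymm (Finset.sup_le ?_) fun b hb => ?_
    · intro _ hc
      obtain ⟨c, -, rfl⟩ := mem_image.mp hc
      exact filter_subset _ _
    obtain ⟨c, hc, hbc⟩ := h hb
    exact mem_sup.mpr ⟨_, mem_image_of_mem _ hc, mem_filter.mpr ⟨hb, hbc⟩⟩
  bot_notMem := by
    intro hbot
    obtain ⟨c, hc, hbot⟩ := mem_image.mp hbot
    exact P.ne_bot hc (by rw [← sup_parts_filter_le h hc, hbot, bot_eq_empty, sup_empty])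

lemma unfuse_fuse (P : Finpartition a) (R : Finpartition P.parts) : unfuse (P.le_fuse R) = R := by
  ext1
  simp only [unfuse, fuse, image_image]
  exact (image_congr (g := id) fun B hB => parts_filter_le_sup P R hB).trans image_id

lemma fuse_unfuse {P Q : Finpartition a} (h : Q ≤ P) : Q.fuse (unfuse h) = P := by
  ext1
  simp only [unfuse, fuse, image_image]
  exact (image_congr (g := id) fun c hc => sup_parts_filter_le h hc).trans image_id

def fuseEquiv (a : α) :
    (Σ Q : Finpartition a, Finpartition Q.parts) ≃
      {PQ : Finpartition a × Finpartition a // PQ.2 ≤ PQ.1} where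
  toFun QR := ⟨(QR.1.fuse QR.2, QR.1), QR.1.le_fuse QR.2⟩
  invFun PQ := ⟨PQ.1.2, unfuse PQ.2⟩
  left_inv _ := Sigma.ext rfl (heq_of_eq (unfuse_fuse _ _))
  right_inv PQ := Subtype.ext (Prod.ext (fuse_unfuse PQ.2) rfl)

end Finpartition

theorem fusion_bijection
    {α : Type*} [DecidableEq α] (s : Finset α) :
    ∃ E : (Σ q : Finpartition s, Finpartition q.parts) ≃
          {pq : Finpartition s × Finpartition s // pq.2 ≤ pq.1},
      ∀ (q : Finpartition s) (ρ : Finpartition q.parts),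
        ((E ⟨q, ρ⟩ : {pq : Finpartition s × Finpartition s // pq.2 ≤ pq.1}) : _).1.2 = q ∧
        ((E ⟨q, ρ⟩ : {pq : Finpartition s × Finpartition s // pq.2 ≤ pq.1}) : _).1.1.parts =
          ρ.parts.image (fun B => B.sup id) :=
  ⟨Finpartition.fuseEquiv s, fun _ _ => ⟨rfl, rfl⟩⟩
end

section
/- Let b : ℕ → ℝ with b 0 = 0 and let c be its exponential coefficient sequence, with c′ its extension to ℤ vanishing on negative integers. For k, n ∈ ℕ and m : Fin k → ℕ define f_k(n, m) := (1 / Nat.descFactorial n k) · ∑_p c′(n − ∑_{q ∈ p.parts} v_q) · ∏_{q ∈ p.parts} δ_q · (b v_q) · Nat.descFactorial v_q (q.card), where the sum runs over all finpartitions p of the full finset of Fin k, v_q denotes the value of m at the minimal element of the part q, and δ_q := 1 if m is constant on q and 0 otherwise (the subtraction n − ∑ v_q is taken in ℤ). Then for all k, n ∈ ℕ with n ≥ k + 1 and every m : Fin k → ℕ, ∑_{m′ ∈ ℕ} f_{k+1}(n, m⌢m′) = f_k(n, m), where m⌢m′ : Fin (k+1) → ℕ extends m by the value m′ in the last coordinate;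 only finitely many terms of the sum are nonzero (all terms with m′ > n vanish). -/
open Finset

/-- The proposed joint density `f_k(n, m)` of `(N, θ₁⁻¹, …, θ_k⁻¹)` (up to the overall
normalization `e^{-x₀}`): for a finpartition `p` of `Fin k`, each part `q` contributes
`δ_q · b(v_q) · descFactorial v_q |q|` where `v_q` is the value of `m` at the minimal
element of `q` and `δ_q` is `1` iff `m` is constant on `q`. -/
noncomputable def partDensity (b : ℕ → ℝ) (c' : ℤ → ℝ) (k n : ℕ) (m : Fin k → ℕ) : ℝ :=
  (1 / (Nat.descFactorial n k : ℝ)) *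
    ∑ p : Finpartition (Finset.univ : Finset (Fin k)),
      c' ((n : ℤ) - ∑ q ∈ p.parts.attach,
            (m ((q : Finset (Fin k)).min' (p.nonempty_of_mem_parts q.2)) : ℤ)) *
        ∏ q ∈ p.parts.attach,
          (if ∀ i ∈ (q : Finset (Fin k)), ∀ j ∈ (q : Finset (Fin k)), m i = m j
              then (1 : ℝ) else 0) *
            b (m ((q : Finset (Fin k)).min' (p.nonempty_of_mem_parts q.2))) *
            (Nat.descFactorial (m ((q : Finset (Fin k)).min' (p.nonempty_of_mem_parts q.2)))
              (q : Finset (Fin k)).card : ℝ)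

/-!
Deleting `Fin.last k` from a finpartition of `Fin (k + 1)` leaves a finpartition `P` of `Fin k`
and the part `t` of `P` that `Fin.last k` belonged to (`t = ∅` if it was a singleton), and this is
a bijection. Fix `P` and write `S = ∑ v_q` over its parts. If `Fin.last k` is a new singleton, the
sum over its value `m'` is `∑ m' b(m') c'(n - S - m') = (n - S) c'(n - S)` by the recurrence for
`c`. If it joins `t`, then `m'` must equal `v_t` and the factor `descFactorial v_t |t|` grows to
`descFactorial v_t (|t| + 1)`, i.e. is multiplied by `v_t - |t|`. These factors add up to
`(n - S) + ∑ (v_t - |t|) = n - k`, which is exactly `descFactorial n (k + 1) / descFactorial n k`.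
-/

namespace Finset
variable {k : ℕ}

noncomputable def init (s : Finset (Fin (k + 1))) : Finset (Fin k) :=
  s.preimage Fin.castSucc (Fin.castSucc_injective k).injOn

@[simp] lemma mem_init {s : Finset (Fin (k + 1))} {j : Fin k} : j ∈ s.init ↔ j.castSucc ∈ s :=
  mem_preimage

@[simp] lemma last_notMem_map_castSuccEmb (r : Finset (Fin k)) :
    Fin.last k ∉ r.map Fin.castSuccEmb := by
  simp [Fin.castSucc_ne_last]

@[simp] lemma init_map_castSuccEmb (r : Finset (Fin k)) : (r.map Fin.castSuccEmb).init = r := by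
  ext; simp

@[simp] lemma init_insert_last (s : Finset (Fin (k + 1))) :
    (insert (Fin.last k) s).init = s.init := by
  ext; simp [Fin.castSucc_ne_last]

lemma map_castSuccEmb_init {s : Finset (Fin (k + 1))} (h : Fin.last k ∉ s) :
    s.init.map Fin.castSuccEmb = s := by
  ext i; induction i using Fin.lastCases <;> simp [h]

lemma insert_last_map_castSuccEmb_init {s : Finset (Fin (k + 1))} (h : Fin.last k ∈ s) :
    insert (Fin.last k) (s.init.map Fin.castSuccEmb) = s := by
  ext i; induction i using Fin.lastCases <;> simp [h]

lemma min'_map_castSuccEmb {r : Finset (Fin k)} (hr : r.Nonempty) :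
    (r.map Fin.castSuccEmb).min' (hr.map) = (r.min' hr).castSucc := by
  simp [map_eq_image, min'_image Fin.strictMono_castSucc.monotone]

end Finset

namespace Finpartition
variable {k : ℕ}

/-- `t = ∅` puts `Fin.last k` into a new singleton part. -/
def snocParts (P : Finset (Finset (Fin k))) (t : Finset (Fin k)) :
    Finset (Finset (Fin (k + 1))) :=
  insert (insert (Fin.last k) (t.map Fin.castSuccEmb))
    ((P.erase t).image (Finset.map Fin.castSuccEmb))

@[to_additive]
lemma prod_snocParts {M : Type*} [CommMonoid M] (P : Finset (Finset (Fin k)))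
    (t : Finset (Fin k)) (f : Finset (Fin (k + 1)) → M) :
    ∏ q ∈ snocParts P t, f q =
      f (insert (Fin.last k) (t.map Fin.castSuccEmb)) *
        ∏ r ∈ P.erase t, f (r.map Fin.castSuccEmb) := by
  rw [snocParts, prod_insert, prod_image (map_injective _).injOn]
  simp only [mem_image, not_exists, not_and]
  exact fun r _ h => last_notMem_map_castSuccEmb r (h ▸ mem_insert_self _ _)

def snoc (P : Finpartition (univ : Finset (Fin k))) (t : Finset (Fin k))
    (ht : t ∈ insert ∅ P.parts) : Finpartition (univ : Finset (Fin (k + 1))) where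
  parts := snocParts P.parts t
  supIndep := by
    have hdisj : ∀ r ∈ P.parts, r ≠ t → Disjoint t r := by
      rcases mem_insert.1 ht with rfl | ht
      · exact fun r _ _ => disjoint_empty_left r
      · exact fun r hr hrt => P.disjoint ht hr hrt.symm
    rw [supIndep_iff_pairwiseDisjoint, snocParts, coe_insert, coe_image]
    refine Set.PairwiseDisjoint.insert ?_ ?_
    · rw [(map_injective _).injOn.pairwiseDisjoint_image]
      intro r hr r' hr' hrr'
      exact (disjoint_map _).2 (P.disjoint (mem_of_mem_erase hr) (mem_of_mem_erase hr') hrr')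
    · rintro _ ⟨r, hr, rfl⟩ -
      obtain ⟨hrt, hr⟩ := mem_erase.1 hr
      exact disjoint_insert_left.2 ⟨last_notMem_map_castSuccEmb r,
        (disjoint_map _).2 (hdisj r hr hrt)⟩
  sup_parts := by
    refine eq_univ_of_forall fun i => mem_sup.2 ?_
    induction i using Fin.lastCases with
    | last => exact ⟨_, mem_insert_self _ _, mem_insert_self _ _⟩
    | cast j =>
      obtain ⟨r, hr, hjr⟩ := P.exists_mem (mem_univ j)
      by_cases hrt : r = t
      · subst hrt
        exact ⟨_, mem_insert_self _ _, mem_insert_of_mem (mem_map_of_mem _ hjr)⟩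
      · exact ⟨_, mem_insert_of_mem (mem_image_of_mem _ (mem_erase.2 ⟨hrt, hr⟩)),
          mem_map_of_mem _ hjr⟩
  bot_notMem := by
    simp only [snocParts, bot_eq_empty, mem_insert, mem_image, mem_erase, not_or, not_exists,
      not_and]
    exact ⟨(insert_nonempty _ _).ne_empty.symm,
      fun r hr h => P.ne_empty hr.2 (map_eq_empty.1 h)⟩

noncomputable def init (p : Finpartition (univ : Finset (Fin (k + 1)))) :
    Finpartition (univ : Finset (Fin k)) :=
  ofErase (p.parts.image Finset.init)
    (by
      rw [supIndep_iff_pairwiseDisjoint, coe_image]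
      rintro _ ⟨s, hs, rfl⟩ _ ⟨s', hs', rfl⟩ hss'
      have := p.disjoint hs hs' fun h => hss' (h ▸ rfl)
      exact disjoint_left.2 fun j hj hj' =>
        disjoint_left.1 this (mem_init.1 hj) (mem_init.1 hj'))
    (by
      refine eq_univ_of_forall fun j => mem_sup.2 ?_
      obtain ⟨s, hs, hjs⟩ := p.exists_mem (mem_univ j.castSucc)
      exact ⟨s.init, mem_image_of_mem _ hs, mem_init.2 hjs⟩)

lemma part_last_mem (p : Finpartition (univ : Finset (Fin (k + 1)))) :
    p.part (Fin.last k) ∈ p.parts :=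
  p.part_mem.2 (mem_univ _)

lemma init_part_last_mem (p : Finpartition (univ : Finset (Fin (k + 1)))) :
    (p.part (Fin.last k)).init ∈ insert ∅ p.init.parts := by
  by_cases h : (p.part (Fin.last k)).init = ∅
  · exact h ▸ mem_insert_self _ _
  · exact mem_insert_of_mem (mem_erase.2 ⟨h, mem_image_of_mem _ (part_last_mem p)⟩)

lemma snocParts_init (p : Finpartition (univ : Finset (Fin (k + 1)))) :
    snocParts p.init.parts (p.part (Fin.last k)).init = p.parts := by
  set T := p.part (Fin.last k)
  have hT : T ∈ p.parts := part_last_mem p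
  have hlast : ∀ {s}, s ∈ p.parts → s ≠ T → Fin.last k ∉ s := fun hs hsT h =>
    hsT (p.eq_of_mem_parts hs hT h (p.mem_part (mem_univ _)))
  suffices h : ((p.init.parts).erase T.init).image (Finset.map Fin.castSuccEmb) = p.parts.erase T by
    rw [snocParts, insert_last_map_castSuccEmb_init (p.mem_part (mem_univ _)), h, insert_erase hT]
  ext s
  simp only [init, ofErase_parts, bot_eq_empty, mem_image, mem_erase]
  constructor
  · rintro ⟨_, ⟨hrT, -, s, hs, rfl⟩, rfl⟩
    have hsT : s ≠ T := by rintro rfl; exact hrT rfl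
    rw [map_castSuccEmb_init (hlast hs hsT)]
    exact ⟨hsT, hs⟩
  · rintro ⟨hsT, hs⟩
    have hmap := map_castSuccEmb_init (hlast hs hsT)
    obtain ⟨j, hj⟩ : s.init.Nonempty := by
      rw [nonempty_iff_ne_empty]
      exact fun h => p.ne_empty hs (by rw [← hmap, h, map_empty])
    refine ⟨s.init, ⟨fun h => hsT ?_, ne_empty_of_mem hj, s, hs, rfl⟩, hmap⟩
    exact p.eq_of_mem_parts hs hT (mem_init.1 hj) (mem_init.1 (h ▸ hj))

lemma init_snoc (P : Finpartition (univ : Finset (Fin k))) (t : Finset (Fin k))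
    (ht : t ∈ insert ∅ P.parts) : (P.snoc t ht).init = P := by
  ext1
  show ((snocParts P.parts t).image Finset.init).erase ∅ = P.parts
  rw [snocParts, image_insert, init_insert_last, init_map_castSuccEmb, image_image]
  simp only [Function.comp_def, init_map_castSuccEmb, image_id']
  rcases mem_insert.1 ht with rfl | ht
  · rw [erase_insert (notMem_erase _ _), erase_eq_self.2 P.empty_notMem_parts]
  · rw [insert_erase ht, erase_eq_self.2 P.empty_notMem_parts]

lemma part_last_snoc (P : Finpartition (univ : Finset (Fin k))) (t : Finset (Fin k))
    (ht : t ∈ insert ∅ P.parts) :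
    (P.snoc t ht).part (Fin.last k) = insert (Fin.last k) (t.map Fin.castSuccEmb) :=
  part_eq_of_mem _ (mem_insert_self _ _) (mem_insert_self _ _)

theorem sum_univ_fin_succ {M : Type*} [AddCommMonoid M] (f : Finset (Finset (Fin (k + 1))) → M) :
    ∑ p : Finpartition (univ : Finset (Fin (k + 1))), f p.parts =
      ∑ P : Finpartition (univ : Finset (Fin k)), ∑ t ∈ insert ∅ P.parts,
        f (snocParts P.parts t) := by
  rw [sum_sigma']
  refine sum_bij' (fun p _ => ⟨p.init, (p.part (Fin.last k)).init⟩)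
    (fun x hx => x.1.snoc x.2 (mem_sigma.1 hx).2)
    (fun p _ => mem_sigma.2 ⟨mem_univ _, init_part_last_mem p⟩) (fun _ _ => mem_univ _)
    (fun p _ => Finpartition.ext (snocParts_init p)) ?_ (fun p _ => by rw [snocParts_init])
  rintro ⟨P, t⟩ hx
  simp only [init_snoc, part_last_snoc, init_insert_last, init_map_castSuccEmb]

end Finpartition

section PartWeights
variable {k : ℕ} (b : ℕ → ℝ) (c' : ℤ → ℝ) (n : ℕ)

def minValue (μ : Fin k → ℕ) (q : Finset (Fin k)) : ℕ :=
  if h : q.Nonempty then μ (q.min' h) else 0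

lemma minValue_of_nonempty (μ : Fin k → ℕ) {q : Finset (Fin k)} (h : q.Nonempty) :
    minValue μ q = μ (q.min' h) :=
  dif_pos h

lemma forall_mem_eq_iff_minValue (μ : Fin k → ℕ) (q : Finset (Fin k)) :
    (∀ i ∈ q, ∀ j ∈ q, μ i = μ j) ↔ ∀ i ∈ q, μ i = minValue μ q := by
  rcases q.eq_empty_or_nonempty with rfl | hq
  · simp
  rw [minValue_of_nonempty μ hq]
  exact ⟨fun h i hi => h i hi _ (q.min'_mem hq),
    fun h i hi j hj => (h i hi).trans (h j hj).symm⟩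

noncomputable def partWeight (μ : Fin k → ℕ) (q : Finset (Fin k)) : ℝ :=
  (if ∀ i ∈ q, μ i = minValue μ q then 1 else 0) * b (minValue μ q) *
    (minValue μ q).descFactorial q.card

noncomputable def partTerm (μ : Fin k → ℕ) (P : Finset (Finset (Fin k))) : ℝ :=
  c' (n - ∑ q ∈ P, (minValue μ q : ℤ)) * ∏ q ∈ P, partWeight b μ q

lemma partDensity_eq_sum_partTerm (μ : Fin k → ℕ) :
    partDensity b c' k n μ =
      1 / (n.descFactorial k : ℝ) * ∑ p : Finpartition (univ : Finset (Fin k)),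
        partTerm b c' n μ p.parts := by
  unfold partDensity partTerm partWeight
  refine congrArg _ (sum_congr rfl fun p _ => ?_)
  rw [← sum_attach p.parts, ← prod_attach p.parts]
  congr 1
  · congr 2
    exact sum_congr rfl fun q _ => by rw [minValue_of_nonempty μ (p.nonempty_of_mem_parts q.2)]
  · refine prod_congr rfl fun q _ => ?_
    simp only [forall_mem_eq_iff_minValue μ q.1,
      minValue_of_nonempty μ (p.nonempty_of_mem_parts q.2)]

variable (m : Fin k → ℕ) (m' : ℕ)

lemma minValue_snoc_map (r : Finset (Fin k)) :
    minValue (Fin.snoc m m' : Fin (k + 1) → ℕ) (r.map Fin.castSuccEmb) = minValue m r := by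
  rcases r.eq_empty_or_nonempty with rfl | hr
  · simp [minValue]
  rw [minValue_of_nonempty _ hr.map, minValue_of_nonempty m hr, min'_map_castSuccEmb hr,
    Fin.snoc_castSucc]

lemma minValue_snoc_singleton_last :
    minValue (Fin.snoc m m' : Fin (k + 1) → ℕ) {Fin.last k} = m' := by
  simp [minValue]

lemma minValue_snoc_insert_last {t : Finset (Fin k)} (ht : t.Nonempty) :
    minValue (Fin.snoc m m' : Fin (k + 1) → ℕ) (insert (Fin.last k) (t.map Fin.castSuccEmb)) =
      minValue m t := by
  rw [minValue_of_nonempty _ (insert_nonempty _ _), min'_insert _ _ ht.map,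
    min'_map_castSuccEmb ht, min_eq_right (Fin.castSucc_lt_last _).le, Fin.snoc_castSucc,
    minValue_of_nonempty m ht]

lemma partWeight_snoc_map (r : Finset (Fin k)) :
    partWeight b (Fin.snoc m m' : Fin (k + 1) → ℕ) (r.map Fin.castSuccEmb) =
      partWeight b m r := by
  simp [partWeight, minValue_snoc_map]

lemma partWeight_snoc_singleton_last :
    partWeight b (Fin.snoc m m' : Fin (k + 1) → ℕ) {Fin.last k} = m' * b m' := by
  simp [partWeight, minValue, mul_comm]

lemma partWeight_snoc_insert_last {t : Finset (Fin k)} (ht : t.Nonempty) :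
    partWeight b (Fin.snoc m m' : Fin (k + 1) → ℕ)
        (insert (Fin.last k) (t.map Fin.castSuccEmb)) =
      (if m' = minValue m t then 1 else 0) * ((minValue m t - #t) * partWeight b m t) := by
  have hdesc : ((minValue m t).descFactorial (#t + 1) : ℝ) =
      (minValue m t).descFactorial #t * (minValue m t - #t) := by
    simp only [← descPochhammer_eval_eq_descFactorial ℝ, descPochhammer_succ_eval]
  simp only [partWeight, minValue_snoc_insert_last m m' ht, forall_mem_insert, forall_mem_map,
    Fin.castSuccEmb_apply, Fin.snoc_last, Fin.snoc_castSucc,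
    card_insert_of_notMem (last_notMem_map_castSuccEmb t), card_map, hdesc]
  by_cases hm' : m' = minValue m t
  · simp only [hm', true_and, if_true, one_mul]
    split_ifs <;> ring
  · simp [hm']

lemma partTerm_snoc_snocParts_empty {P : Finset (Finset (Fin k))} (hP : ∅ ∉ P) :
    partTerm b c' n (Fin.snoc m m' : Fin (k + 1) → ℕ) (Finpartition.snocParts P ∅) =
      m' * b m' * c' ((n - ∑ q ∈ P, (minValue m q : ℤ)) - m') *
        ∏ q ∈ P, partWeight b m q := by
  simp only [partTerm, Finpartition.sum_snocParts, Finpartition.prod_snocParts,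
    erase_eq_self.2 hP, map_empty, insert_empty, minValue_snoc_singleton_last,
    partWeight_snoc_singleton_last, minValue_snoc_map, partWeight_snoc_map]
  ring_nf

lemma partTerm_snoc_snocParts_of_mem {P : Finset (Finset (Fin k))} {t : Finset (Fin k)}
    (ht : t ∈ P) (htne : t.Nonempty) :
    partTerm b c' n (Fin.snoc m m' : Fin (k + 1) → ℕ) (Finpartition.snocParts P t) =
      (if m' = minValue m t then 1 else 0) * ((minValue m t - #t) * partTerm b c' n m P) := by
  simp only [partTerm, Finpartition.sum_snocParts, Finpartition.prod_snocParts,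
    minValue_snoc_insert_last m m' htne, partWeight_snoc_insert_last b m m' htne,
    minValue_snoc_map, partWeight_snoc_map]
  rw [add_sum_erase P (fun q => (minValue m q : ℤ)) ht, ← mul_prod_erase P (partWeight b m) ht]
  ring

end PartWeights

lemma sum_minValue_le_of_partTerm_ne_zero {b : ℕ → ℝ} {c' : ℤ → ℝ}
    (hc'neg : ∀ j : ℤ, j < 0 → c' j = 0) {k n : ℕ} {μ : Fin k → ℕ}
    {P : Finset (Finset (Fin k))} (h : partTerm b c' n μ P ≠ 0) :
    ∑ q ∈ P, (minValue μ q : ℤ) ≤ n := by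
  by_contra hlt
  exact h (by rw [partTerm, hc'neg _ (by omega), zero_mul])

lemma le_of_partTerm_ne_zero {b : ℕ → ℝ} {c' : ℤ → ℝ}
    (hc'neg : ∀ j : ℤ, j < 0 → c' j = 0) {k n : ℕ} {μ : Fin k → ℕ}
    {p : Finpartition (univ : Finset (Fin k))}
    (h : partTerm b c' n μ p.parts ≠ 0) (i : Fin k) : μ i ≤ n := by
  have hq : p.part i ∈ p.parts := p.part_mem.2 (mem_univ i)
  have hi : μ i = minValue μ (p.part i) := by
    by_contra hne
    have hw : partWeight b μ (p.part i) = 0 := by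
      rw [partWeight, if_neg fun hc => hne (hc i (p.mem_part (mem_univ i))), zero_mul, zero_mul]
    exact h (by rw [partTerm, prod_eq_zero hq hw, mul_zero])
  have := single_le_sum (f := fun q => (minValue μ q : ℤ)) (fun _ _ => by positivity) hq
  have := sum_minValue_le_of_partTerm_ne_zero hc'neg h
  omega

lemma sum_range_mul_mul_sub_eq {b c : ℕ → ℝ} {c' : ℤ → ℝ}
    (hc'neg : ∀ j : ℤ, j < 0 → c' j = 0)
    (hc : ∀ n : ℕ, 1 ≤ n → (n : ℝ) * c n = ∑ m ∈ Icc 1 n, (m : ℝ) * b m * c (n - m))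
    (hc'nat : ∀ n : ℕ, c' n = c n) {n : ℕ} {N : ℤ} (hN : N ≤ n) :
    ∑ j ∈ range (n + 1), (j : ℝ) * b j * c' (N - j) = N * c' N := by
  rcases lt_or_ge N 0 with hneg | hnn
  · rw [hc'neg N hneg, mul_zero]
    exact sum_eq_zero fun j _ => by rw [hc'neg _ (by omega), mul_zero]
  lift N to ℕ using hnn
  have hsub : Icc 1 N ⊆ range (n + 1) := fun j hj => by
    simp only [mem_Icc, mem_range] at hj ⊢; omega
  rw [← sum_subset hsub fun j hj hjN => ?_]
  · rcases N.eq_zero_or_pos with rfl | hN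
    · simp
    rw [Int.cast_natCast, hc'nat, hc N hN]
    refine sum_congr rfl fun j hj => ?_
    rw [← Nat.cast_sub (mem_Icc.1 hj).2, hc'nat]
  · simp only [mem_Icc, mem_range, not_and_or, not_le] at hj hjN
    rcases hjN with h0 | hlt
    · simp [Nat.lt_one_iff.1 h0]
    · rw [hc'neg _ (by omega), mul_zero]

lemma sum_sum_partTerm_snoc_snocParts {b : ℕ → ℝ} {c : ℕ → ℝ} {c' : ℤ → ℝ}
    (hc : ∀ n : ℕ, 1 ≤ n → (n : ℝ) * c n = ∑ m ∈ Icc 1 n, (m : ℝ) * b m * c (n - m))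
    (hc'nat : ∀ n : ℕ, c' n = c n) (hc'neg : ∀ j : ℤ, j < 0 → c' j = 0)
    {k : ℕ} (n : ℕ) (m : Fin k → ℕ) (P : Finpartition (univ : Finset (Fin k))) :
    ∑ t ∈ insert ∅ P.parts, ∑ m' ∈ range (n + 1),
        partTerm b c' n (Fin.snoc m m' : Fin (k + 1) → ℕ) (Finpartition.snocParts P.parts t) =
      (n - k) * partTerm b c' n m P.parts := by
  set S := ∑ q ∈ P.parts, (minValue m q : ℤ)
  have hnew : ∑ m' ∈ range (n + 1), partTerm b c' n (Fin.snoc m m' : Fin (k + 1) → ℕ)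
      (Finpartition.snocParts P.parts ∅) = (n - S) * partTerm b c' n m P.parts := by
    have hS : 0 ≤ S := sum_nonneg fun _ _ => by positivity
    rw [sum_congr rfl fun m' _ =>
        partTerm_snoc_snocParts_empty b c' n m m' P.empty_notMem_parts,
      ← sum_mul, sum_range_mul_mul_sub_eq hc'neg hc hc'nat (by omega : (n : ℤ) - S ≤ n),
      partTerm]
    push_cast
    ring
  have hold : ∀ t ∈ P.parts, ∑ m' ∈ range (n + 1), partTerm b c' n
      (Fin.snoc m m' : Fin (k + 1) → ℕ) (Finpartition.snocParts P.parts t) =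
      (minValue m t - #t) * partTerm b c' n m P.parts := by
    intro t ht
    simp_rw [sum_congr rfl fun m' _ =>
      partTerm_snoc_snocParts_of_mem b c' n m m' ht (P.nonempty_of_mem_parts ht), ite_mul,
      one_mul, zero_mul, sum_ite_eq', mem_range_succ_iff]
    split_ifs with hle
    · rfl
    · suffices partTerm b c' n m P.parts = 0 by rw [this, mul_zero]
      by_contra h
      have := single_le_sum (f := fun q => (minValue m q : ℤ)) (fun _ _ => by positivity) ht
      have := sum_minValue_le_of_partTerm_ne_zero hc'neg h
      omega
  have hcard : ∑ t ∈ P.parts, (#t : ℝ) = k := by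
    rw [← Nat.cast_sum, P.sum_card_parts, card_univ, Fintype.card_fin]
  rw [sum_insert P.empty_notMem_parts, hnew, sum_congr rfl hold, ← sum_mul, ← add_mul,
    sum_sub_distrib, hcard]
  push_cast [S]
  ring

theorem marginal_consistency_of_partDensity_general
    (b : ℕ → ℝ)
    (c : ℕ → ℝ)
    (hc : ∀ n : ℕ, 1 ≤ n → (n : ℝ) * c n = ∑ m ∈ Finset.Icc 1 n, (m : ℝ) * b m * c (n - m))
    (c' : ℤ → ℝ) (hc'nat : ∀ n : ℕ, c' n = c n) (hc'neg : ∀ j : ℤ, j < 0 → c' j = 0)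
    (k n : ℕ) (hn : k + 1 ≤ n) (m : Fin k → ℕ) :
    (∀ m' : ℕ, n < m' → partDensity b c' (k + 1) n (Fin.snoc m m') = 0) ∧
    ∑' m' : ℕ, partDensity b c' (k + 1) n (Fin.snoc m m') = partDensity b c' k n m := by
  have hvanish : ∀ m' : ℕ, n < m' → partDensity b c' (k + 1) n (Fin.snoc m m') = 0 := by
    intro m' hm'
    rw [partDensity_eq_sum_partTerm]
    refine mul_eq_zero_of_right _ (sum_eq_zero fun p _ => ?_)
    by_contra h
    have := le_of_partTerm_ne_zero hc'neg h (Fin.last k)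
    rw [Fin.snoc_last] at this
    omega
  refine ⟨hvanish, ?_⟩
  rw [tsum_eq_sum (s := range (n + 1)) fun m' hm' => hvanish m' (by simpa using hm')]
  simp_rw [partDensity_eq_sum_partTerm, Finpartition.sum_univ_fin_succ, ← mul_sum]
  have hD : (n.descFactorial (k + 1) : ℝ) = (n - k) * n.descFactorial k := by
    rw [Nat.descFactorial_succ, Nat.cast_mul, Nat.cast_sub (by omega)]
  have hnk : (n : ℝ) - k ≠ 0 := sub_ne_zero.2 (by norm_cast; omega)
  simp_rw [sum_comm (s := range (n + 1)),
    sum_sum_partTerm_snoc_snocParts hc hc'nat hc'neg n m, ← mul_sum, hD]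
  field_simp

theorem marginal_consistency_of_partDensity
    (b : ℕ → ℝ) (hb0 : b 0 = 0)
    (c : ℕ → ℝ) (hc0 : c 0 = 1)
    (hc : ∀ n : ℕ, 1 ≤ n → (n : ℝ) * c n = ∑ m ∈ Finset.Icc 1 n, (m : ℝ) * b m * c (n - m))
    (c' : ℤ → ℝ) (hc'nat : ∀ n : ℕ, c' n = c n) (hc'neg : ∀ j : ℤ, j < 0 → c' j = 0)
    (k n : ℕ) (hn : k + 1 ≤ n) (m : Fin k → ℕ) :
    (∀ m' : ℕ, n < m' → partDensity b c' (k + 1) n (Fin.snoc m m') = 0) ∧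
    ∑' m' : ℕ, partDensity b c' (k + 1) n (Fin.snoc m m') = partDensity b c' k n m :=
  marginal_consistency_of_partDensity_general b c hc c' hc'nat hc'neg k n hn m
end

section
/- Let b : ℕ → ℝ with b 0 = 0 and let c be its exponential coefficient sequence (the coefficients of the formal power series exp(∑_{k≥1} (b k)·X^k)). Then for every n ∈ ℕ, c n = ∑_{λ ∈ Nat.Partition n} ∏_{v} (b v)^(a_v(λ)) / (a_v(λ))!, where the product runs over the distinct part sizes v of λ and a_v(λ) denotes the multiplicity of v in λ. -/
/-!
Both sides satisfy the recurrence `n c(n) = ∑_{m=1}^n m b(m) c(n-m)` with value `1` at `0`, and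
this recurrence determines the sequence. For the partition sum `S`, write `n = ∑_m m a_m(λ)` for a
partition `λ` of `n`. Deleting one part `m` maps the partitions of `n` containing `m` bijectively
onto the partitions of `n - m`, and `a_m(λ) w(λ) = b(m) w(λ ∖ m)` for the weights `w`, so that
`∑_λ a_m(λ) w(λ) = b(m) S(n-m)`.
-/

open Finset

theorem eq_of_exp_recurrence {K : Type*} [Field K] [CharZero K] {b c d : ℕ → K}
    (h0 : c 0 = d 0)
    (hc : ∀ n : ℕ, 1 ≤ n → (n : K) * c n = ∑ m ∈ Icc 1 n, (m : K) * b m * c (n - m))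
    (hd : ∀ n : ℕ, 1 ≤ n → (n : K) * d n = ∑ m ∈ Icc 1 n, (m : K) * b m * d (n - m)) :
    c = d := by
  funext n
  induction n using Nat.strong_induction_on with
  | _ n ih =>
    rcases Nat.eq_zero_or_pos n with rfl | hn
    · exact h0
    · refine mul_left_cancel₀ (Nat.cast_ne_zero.mpr hn.ne') ?_
      rw [hc n hn, hd n hn]
      exact sum_congr rfl fun m hm => by rw [ih (n - m) (by grind)]

namespace Multiset

variable {K : Type*} [Field K] (b : ℕ → K)

noncomputable def expWeight (s : Multiset ℕ) : K :=
  ∏ v ∈ s.toFinset, b v ^ s.count v / (s.count v).factorial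

@[simp]
theorem expWeight_zero : expWeight b 0 = 1 := by
  simp [expWeight]

theorem expWeight_eq_prod_of_subset {s : Multiset ℕ} {t : Finset ℕ} (h : s.toFinset ⊆ t) :
    expWeight b s = ∏ v ∈ t, b v ^ s.count v / (s.count v).factorial :=
  prod_subset h fun v _ hv => by simp [count_eq_zero.mpr (mt mem_toFinset.mpr hv)]

theorem count_add_one_mul_expWeight_cons [CharZero K] (m : ℕ) (s : Multiset ℕ) :
    ((s.count m : K) + 1) * expWeight b (m ::ₘ s) = b m * expWeight b s := by
  have hsub : s.toFinset ⊆ insert m s.toFinset := subset_insert _ _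
  rw [expWeight, toFinset_cons, expWeight_eq_prod_of_subset b hsub,
    ← mul_prod_erase _ _ (mem_insert_self m _), ← mul_prod_erase _ _ (mem_insert_self m _),
    prod_congr rfl fun v hv => by rw [count_cons_of_ne (ne_of_mem_erase hv)],
    count_cons_self, Nat.factorial_succ]
  push_cast
  field_simp
  ring

end Multiset

namespace Nat.Partition

open Multiset (expWeight)

theorem sum_Icc_mul_count {n : ℕ} (p : n.Partition) :
    ∑ m ∈ Icc 1 n, m * p.parts.count m = n := by
  have hsub : p.parts.toFinset ⊆ Icc 1 n := fun m hm =>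
    mem_Icc.mpr ⟨p.parts_pos (Multiset.mem_toFinset.mp hm),
      le_of_mem_parts (Multiset.mem_toFinset.mp hm)⟩
  conv_rhs => rw [← p.parts_sum, sum_multiset_count_of_subset _ _ hsub]
  simp [mul_comm]

variable {K : Type*} [Field K] (b : ℕ → K)

noncomputable def expWeightSum (n : ℕ) : K :=
  ∑ p : n.Partition, expWeight b p.parts

@[simp]
theorem expWeightSum_zero : expWeightSum b 0 = 1 := by
  simp [expWeightSum]

variable [CharZero K]

theorem sum_count_mul_expWeight {n m : ℕ} (hm : 1 ≤ m) (hmn : m ≤ n) :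
    ∑ p : n.Partition, (p.parts.count m : K) * expWeight b p.parts =
      b m * expWeightSum b (n - m) := by
  classical
  rw [← Fintype.sum_subtype_add_sum_subtype (fun p : n.Partition => m ∈ p.parts)]
  have hout : ∑ p : {p : n.Partition // m ∉ p.parts},
      (p.1.parts.count m : K) * expWeight b p.1.parts = 0 :=
    Fintype.sum_eq_zero _ fun p => by simp [Multiset.count_eq_zero.mpr p.2]
  rw [hout, add_zero, expWeightSum, mul_sum, ← (partitionWithPartEquiv hm hmn).symm.sum_comp]
  refine Fintype.sum_congr _ _ fun q => ?_
  rw [partitionWithPartEquiv_symm_apply_parts, Multiset.count_cons_self]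
  push_cast
  exact Multiset.count_add_one_mul_expWeight_cons b m q.parts

theorem mul_expWeightSum (n : ℕ) :
    (n : K) * expWeightSum b n = ∑ m ∈ Icc 1 n, (m : K) * b m * expWeightSum b (n - m) := by
  calc (n : K) * expWeightSum b n
      = ∑ p : n.Partition, ∑ m ∈ Icc 1 n, (m : K) * (p.parts.count m * expWeight b p.parts) := by
        refine (mul_sum _ _ _).trans (sum_congr rfl fun p _ => ?_)
        have hn : (n : K) = ∑ m ∈ Icc 1 n, (m : K) * p.parts.count m := by
          exact_mod_cast (sum_Icc_mul_count p).symm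
        simp only [hn, sum_mul, mul_assoc]
    _ = ∑ m ∈ Icc 1 n, (m : K) * ∑ p : n.Partition, p.parts.count m * expWeight b p.parts := by
        simp only [sum_comm (s := univ), mul_sum]
    _ = ∑ m ∈ Icc 1 n, (m : K) * b m * expWeightSum b (n - m) :=
        sum_congr rfl fun m hm => by
          rw [sum_count_mul_expWeight b (mem_Icc.mp hm).1 (mem_Icc.mp hm).2, mul_assoc]

end Nat.Partition

theorem exponential_formula_for_coefficients_general
    (b : ℕ → ℝ)
    (c : ℕ → ℝ) (hc0 : c 0 = 1)
    (hc : ∀ n : ℕ, 1 ≤ n → (n : ℝ) * c n = ∑ m ∈ Finset.Icc 1 n, (m : ℝ) * b m * c (n - m))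
    (n : ℕ) :
    c n = ∑ lam : Nat.Partition n,
      ∏ v ∈ lam.parts.toFinset,
        (b v) ^ (lam.parts.count v) / (Nat.factorial (lam.parts.count v) : ℝ) := by
  have hS : c = Nat.Partition.expWeightSum b :=
    eq_of_exp_recurrence (by simp [hc0]) hc fun n _ => Nat.Partition.mul_expWeightSum b n
  exact congrFun hS n

theorem exponential_formula_for_coefficients
    (b : ℕ → ℝ) (hb0 : b 0 = 0)
    (c : ℕ → ℝ) (hc0 : c 0 = 1)
    (hc : ∀ n : ℕ, 1 ≤ n → (n : ℝ) * c n = ∑ m ∈ Finset.Icc 1 n, (m : ℝ) * b m * c (n - m))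
    (n : ℕ) :
    c n = ∑ lam : Nat.Partition n,
      ∏ v ∈ lam.parts.toFinset,
        (b v) ^ (lam.parts.count v) / (Nat.factorial (lam.parts.count v) : ℝ) :=
  exponential_formula_for_coefficients_general b c hc0 hc n
end

section
/- Let Z : ℕ → ℝ and ζ ∈ ℝ, and for a genus assignment g : ℕ → ℕ and a finset s ⊆ ℕ define ZG g s := Real.exp ζ · ∑_p ∏_{B ∈ p.parts} Z(∑_{i ∈ B} g i), the sum running over all finpartitions p of s. Then the following are equivalent: (i) for every g : ℕ → ℕ and all nonempty disjoint finsets s, t ⊆ ℕ one has ZG g (s ∪ t) = (ZG g s)·(ZG g t); (ii) Z n = 0 for every n ∈ ℕ. -/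
open Finset

/-- The full gravitational partition function on a disjoint union of connected surfaces
indexed by a finset `s ⊆ ℕ` with genus function `g`, built from the connected contributions
`Z` (depending only on the total genus) and the closed-manifold sum `ζ`. -/
noncomputable def gravZ (Z : ℕ → ℝ) (ζ : ℝ) (g : ℕ → ℕ) (s : Finset ℕ) : ℝ :=
  Real.exp ζ * ∑ p : Finpartition s, ∏ B ∈ p.parts, Z (∑ i ∈ B, g i)

/-! Factorization over `{0} ⊔ {1}` gives `Z (m + n) = (exp ζ - 1) Z m Z n`, which still allows
the constant solution `Z ≡ 1 / (exp ζ - 1)`. Factorization over `{0, 1} ⊔ {2}` with all genera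
zero adds `z + 3z² + z³ = exp ζ (z + z²) z` for `z = Z 0`; together with the two-point relation
at `m = n = 0` this forces `z² = 0`, and then `Z n = (exp ζ - 1) Z n Z 0 = 0`. Conversely, if
`Z` vanishes, every finpartition of a nonempty set has a part, so every summand of `gravZ`
vanishes. -/

namespace Finpartition

variable {α : Type*} [DecidableEq α]

theorem sum_eq_sum_image_parts {M : Type*} [AddCommMonoid M] (s : Finset α)
    (f : Finset (Finset α) → M) :
    ∑ P : Finpartition s, f P.parts =
      ∑ q ∈ (univ : Finset (Finpartition s)).image Finpartition.parts, f q :=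
  (sum_image fun _ _ _ _ h => Finpartition.ext h).symm

theorem image_parts_singleton (a : α) :
    (univ : Finset (Finpartition ({a} : Finset α))).image Finpartition.parts = {{{a}}} := by
  let : Unique (Finpartition ({a} : Finset α)) :=
    (isAtom_singleton a).uniqueFinpartition (P := indiscrete (singleton_ne_empty a))
  rw [univ_unique, image_singleton]
  rfl

theorem image_parts_zero_one :
    (univ : Finset (Finpartition ({0, 1} : Finset ℕ))).image Finpartition.parts
      = {{{0, 1}}, {{0}, {1}}} := by
  decide

set_option maxRecDepth 10000 in
theorem image_parts_zero_one_two :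
    (univ : Finset (Finpartition ({0, 1, 2} : Finset ℕ))).image Finpartition.parts
      = {{{0, 1, 2}}, {{0, 1}, {2}}, {{0, 2}, {1}}, {{1, 2}, {0}}, {{0}, {1}, {2}}} := by
  decide

end Finpartition

section gravZ

variable (Z : ℕ → ℝ) (ζ : ℝ) (g : ℕ → ℕ)

theorem gravZ_eq_exp_mul_sum_image_parts (s : Finset ℕ) :
    gravZ Z ζ g s = Real.exp ζ *
      ∑ q ∈ (univ : Finset (Finpartition s)).image Finpartition.parts,
        ∏ B ∈ q, Z (∑ i ∈ B, g i) :=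
  congrArg (Real.exp ζ * ·) <|
    Finpartition.sum_eq_sum_image_parts s fun q => ∏ B ∈ q, Z (∑ i ∈ B, g i)

theorem gravZ_singleton (a : ℕ) : gravZ Z ζ g {a} = Real.exp ζ * Z (g a) := by
  simp [gravZ_eq_exp_mul_sum_image_parts, Finpartition.image_parts_singleton]

theorem gravZ_zero_one :
    gravZ Z ζ g {0, 1} = Real.exp ζ * (Z (g 0 + g 1) + Z (g 0) * Z (g 1)) := by
  rw [gravZ_eq_exp_mul_sum_image_parts, Finpartition.image_parts_zero_one]
  simp +decide

theorem gravZ_zero_one_two :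
    gravZ Z ζ g {0, 1, 2} = Real.exp ζ * (Z (g 0 + g 1 + g 2) + Z (g 0 + g 1) * Z (g 2) +
      Z (g 0 + g 2) * Z (g 1) + Z (g 1 + g 2) * Z (g 0) + Z (g 0) * Z (g 1) * Z (g 2)) := by
  rw [gravZ_eq_exp_mul_sum_image_parts, Finpartition.image_parts_zero_one_two]
  simp +decide [add_assoc]
  ring

theorem gravZ_eq_zero (hZ : ∀ n, Z n = 0) {s : Finset ℕ} (hs : s.Nonempty) :
    gravZ Z ζ g s = 0 := by
  refine mul_eq_zero_of_right _ (sum_eq_zero fun P _ => ?_)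
  obtain ⟨B, hB⟩ := P.parts_nonempty hs.ne_empty
  exact prod_eq_zero hB (hZ _)

end gravZ

theorem eq_zero_of_two_three_point_relations {Z : ℕ → ℝ} {E : ℝ}
    (h₂ : ∀ m n, Z (m + n) + Z m * Z n = E * (Z m * Z n))
    (h₃ : Z 0 + 3 * Z 0 ^ 2 + Z 0 ^ 3 = E * ((Z 0 + Z 0 ^ 2) * Z 0)) (n : ℕ) :
    Z n = 0 := by
  have h₀₀ := h₂ 0 0
  have hz : Z 0 = 0 := pow_eq_zero_iff two_ne_zero |>.mp <| by
    linear_combination h₃ - h₀₀ - Z 0 * h₀₀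
  simpa [hz] using h₂ n 0

theorem factorization_iff_vanishing (Z : ℕ → ℝ) (ζ : ℝ) :
    (∀ (g : ℕ → ℕ) (s t : Finset ℕ), s.Nonempty → t.Nonempty → Disjoint s t →
        gravZ Z ζ g (s ∪ t) = gravZ Z ζ g s * gravZ Z ζ g t) ↔
      ∀ n : ℕ, Z n = 0 := by
  refine ⟨fun hfac => eq_zero_of_two_three_point_relations (E := Real.exp ζ) ?_ ?_,
    fun hZ g s t hs _ _ => ?_⟩
  · intro m n
    have h := hfac (fun i => if i = 0 then m else n) {0} {1} (by simp) (by simp) (by simp)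
    rw [show ({0} ∪ {1} : Finset ℕ) = {0, 1} from rfl, gravZ_zero_one, gravZ_singleton,
      gravZ_singleton] at h
    simp only [if_pos, one_ne_zero, if_false] at h
    exact mul_left_cancel₀ (Real.exp_ne_zero ζ) (by linear_combination h)
  · have h := hfac (fun _ => 0) {0, 1} {2} (by simp) (by simp) (by simp)
    rw [show ({0, 1} ∪ {2} : Finset ℕ) = {0, 1, 2} from rfl, gravZ_zero_one_two, gravZ_zero_one,
      gravZ_singleton] at h
    exact mul_left_cancel₀ (Real.exp_ne_zero ζ) (by linear_combination h)
  · rw [gravZ_eq_zero Z ζ g hZ hs, zero_mul,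
      gravZ_eq_zero Z ζ g hZ (hs.mono subset_union_left)]
end

section
/- Let t, x ∈ ℝ with 0 < t < 1, x ≥ 0 and x·t < 1. Then the series ∑_{n=0}^∞ ( ∑_{λ ∈ Nat.Partition n} 2^(d(λ)) · x^(ℓ(λ)) ) · t^n is summable, the family m ↦ (1 + x·t^m)/(1 − x·t^m) indexed by integers m ≥ 1 is multipliable, and ∑_{n=0}^∞ ( ∑_{λ ∈ Nat.Partition n} 2^(d(λ)) · x^(ℓ(λ)) ) · t^n = ∏_{m=1}^∞ (1 + x·t^m)/(1 − x·t^m). -/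
/-!
Write `y_m = x t^(m+1)`. Since `(1 + y)/(1 - y) = 1 + ∑_{k ≥ 1} 2 y^k`, expanding the product
`∏_m (1 + ∑_{k ≥ 1} 2 y_m^k)` yields one term `∏_{m ∈ s} 2 y_m^(k_m)` for every finite set `s` of
indices with exponents `k_m ≥ 1`, i.e. for every multiset of natural numbers in which `m` occurs
`k_m` times. Shifting the elements of such a multiset by one gives a partition with `|s|` distinct
parts and `∑ k_m` parts in total, and the term is exactly `2^d(λ) x^ℓ(λ) t^|λ|`. All terms are
nonnegative, so the expansion of the infinite product is a legitimate rearrangement.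
-/

open Finset

theorem HasSum.mul_of_nonneg {ι κ : Type*} {f : ι → ℝ} {g : κ → ℝ} {a b : ℝ}
    (hf0 : 0 ≤ f) (hg0 : 0 ≤ g) (hf : HasSum f a) (hg : HasSum g b) :
    HasSum (fun p : ι × κ => f p.1 * g p.2) (a * b) :=
  hf.mul hg <| summable_mul_of_summable_norm
    (hf.summable.congr fun i => (Real.norm_of_nonneg (hf0 i)).symm)
    (hg.summable.congr fun k => (Real.norm_of_nonneg (hg0 k)).symm)

theorem hasSum_fin_pi_prod_of_nonneg {κ : Type*} (n : ℕ) {f : Fin n → κ → ℝ} {a : Fin n → ℝ}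
    (hf0 : ∀ i, 0 ≤ f i) (hf : ∀ i, HasSum (f i) (a i)) :
    HasSum (fun e : Fin n → κ => ∏ i, f i (e i)) (∏ i, a i) := by
  induction n with
  | zero => simp
  | succ n ih =>
    have h := (hf 0).mul_of_nonneg (hf0 0) (fun e => prod_nonneg fun i _ => hf0 i.succ (e i))
      (ih (fun i => hf0 i.succ) fun i => hf i.succ)
    rw [Fin.prod_univ_succ, ← (Fin.consEquiv fun _ => κ).hasSum_iff]
    convert h using 2 with ⟨k, e⟩
    simp [Fin.prod_univ_succ]

theorem hasSum_pi_prod_of_nonneg {ι κ : Type*} [Fintype ι] {f : ι → κ → ℝ} {a : ι → ℝ}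
    (hf0 : ∀ i, 0 ≤ f i) (hf : ∀ i, HasSum (f i) (a i)) :
    HasSum (fun e : ι → κ => ∏ i, f i (e i)) (∏ i, a i) := by
  let σ := (Fintype.equivFin ι).symm
  have h := hasSum_fin_pi_prod_of_nonneg _ (fun i => hf0 (σ i)) (fun i => hf (σ i))
  rw [← (σ.arrowCongr (Equiv.refl κ)).hasSum_iff, ← σ.prod_comp]
  convert h using 2 with e
  simp [← σ.prod_comp]

theorem HasSum.sigma_of_nonneg {α : Type*} {β : α → Type*} {f : (Σ a, β a) → ℝ} {g : α → ℝ}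
    {c : ℝ} (hf0 : 0 ≤ f) (hf : ∀ a, HasSum (fun b => f ⟨a, b⟩) (g a)) (hg : HasSum g c) :
    HasSum f c := by
  have hs : Summable f := (summable_sigma_of_nonneg hf0).2
    ⟨fun a => (hf a).summable, hg.summable.congr fun a => (hf a).tsum_eq.symm⟩
  have h := hs.hasSum
  rwa [hs.tsum_sigma' fun a => (hf a).summable, tsum_congr fun a => (hf a).tsum_eq,
    hg.tsum_eq] at h

theorem hasSum_sigma_finset_pi_tprod_one_add {ι κ : Type*} {g : ι → κ → ℝ} {φ : ι → ℝ}
    (hg0 : ∀ i, 0 ≤ g i) (hg : ∀ i, HasSum (g i) (φ i)) (hφ : Summable φ) :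
    HasSum (fun p : Σ s : Finset ι, ∀ _ : s, κ => ∏ i : p.1, g i (p.2 i)) (∏' i, (1 + φ i)) := by
  have hφ0 : ∀ i, 0 ≤ φ i := fun i => (hg i).nonneg (hg0 i)
  have hprod := summable_finsetProd_of_summable_nonneg hφ0 hφ
  have hfiber (s : Finset ι) :
      HasSum (fun e : ∀ _ : s, κ => ∏ i : s, g i (e i)) (∏ i ∈ s, φ i) := by
    rw [← prod_coe_sort]
    exact hasSum_pi_prod_of_nonneg (fun i => hg0 i) fun i => hg i
  have hexpand : ∏' i, (1 + φ i) = ∑' s : Finset ι, ∏ i ∈ s, φ i := tprod_one_add hprod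
  rw [hexpand]
  exact HasSum.sigma_of_nonneg (fun p => prod_nonneg fun i _ => hg0 (i : ι) (p.2 i)) hfiber
    hprod.hasSum

theorem hasSum_two_mul_pow_ne_zero {y : ℝ} (hy0 : 0 ≤ y) (hy1 : y < 1) :
    HasSum (fun k : {k : ℕ // k ≠ 0} => 2 * y ^ (k : ℕ)) ((1 + y) / (1 - y) - 1) := by
  have hy : 1 - y ≠ 0 := by linarith
  have h := (hasSum_geometric_of_lt_one hy0 hy1).mul_left 2
  rw [show 2 * (1 - y)⁻¹ = (1 + y) / (1 - y) - 1 + ∑ k ∈ {0}, 2 * y ^ k by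
    field_simp; simp; ring] at h
  exact (Equiv.subtypeEquivRight fun _ => Finset.mem_singleton.not.symm).hasSum_iff.mpr
    ((Finset.hasSum_compl_iff {0}).mpr h)

noncomputable def multisetEquivSigmaCount (α : Type*) [DecidableEq α] :
    Multiset α ≃ Σ s : Finset α, ∀ _ : s, {k : ℕ // k ≠ 0} :=
  Multiset.toFinsupp.toEquiv.trans (finsuppEquivDFinsupp.trans DFinsupp.sigmaFinsetFunEquiv)

@[simp] lemma multisetEquivSigmaCount_fst {α : Type*} [DecidableEq α] (s : Multiset α) :
    (multisetEquivSigmaCount α s).1 = s.toFinset := by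
  simp [multisetEquivSigmaCount]

@[simp] lemma multisetEquivSigmaCount_snd {α : Type*} [DecidableEq α] (s : Multiset α)
    (i : (multisetEquivSigmaCount α s).1) :
    ((multisetEquivSigmaCount α s).2 i : ℕ) = s.count (i : α) :=
  (DFinsupp.sigmaFinsetFunEquiv_apply_snd_coe _ _).trans (by simp)

lemma Nat.Partition.sigma_ext {p q : Σ n, Nat.Partition n} (h : p.2.parts = q.2.parts) :
    p = q := by
  obtain ⟨_, ⟨a, ha, rfl⟩⟩ := p
  obtain ⟨_, ⟨b, hb, rfl⟩⟩ := q
  subst h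
  rfl

noncomputable def multisetEquivSigmaPartition : Multiset ℕ ≃ Σ n, Nat.Partition n where
  toFun s := ⟨_, ⟨s.map (· + 1), by simp, rfl⟩⟩
  invFun p := p.2.parts.map (· - 1)
  left_inv s := by simp [Multiset.map_map]
  right_inv p := by
    refine Nat.Partition.sigma_ext ?_
    dsimp only
    rw [Multiset.map_map]
    exact (Multiset.map_congr rfl fun i hi => Nat.sub_add_cancel (p.2.parts_pos hi)).trans
      p.2.parts.map_id

lemma pow_card_mul_pow_sum_map_succ (x t : ℝ) (s : Multiset ℕ) :
    x ^ Multiset.card s * t ^ (s.map (· + 1)).sum = (s.map fun i => x * t ^ (i + 1)).prod := by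
  induction s using Multiset.induction_on with
  | empty => simp
  | cons a s ih =>
    rw [Multiset.map_cons, Multiset.map_cons, Multiset.sum_cons, Multiset.prod_cons,
      Multiset.card_cons, ← ih]
    ring

def partitionWeight (x t : ℝ) (p : Σ n, Nat.Partition n) : ℝ :=
  2 ^ p.2.parts.toFinset.card * x ^ Multiset.card p.2.parts * t ^ p.1

lemma partitionWeight_multisetEquivSigmaPartition (x t : ℝ) (s : Multiset ℕ) :
    partitionWeight x t (multisetEquivSigmaPartition s) =
      ∏ i ∈ s.toFinset, 2 * (x * t ^ (i + 1)) ^ s.count i := by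
  rw [prod_mul_distrib, prod_const, ← prod_multiset_map_count, ← pow_card_mul_pow_sum_map_succ,
    ← mul_assoc]
  simp [partitionWeight, multisetEquivSigmaPartition, Multiset.toFinset_map,
    card_image_of_injective _ (add_left_injective 1)]

lemma mul_pow_succ_le_mul {t x : ℝ} (ht0 : 0 ≤ t) (ht1 : t ≤ 1) (hx : 0 ≤ x) (m : ℕ) :
    x * t ^ (m + 1) ≤ x * t :=
  mul_le_mul_of_nonneg_left (pow_le_of_le_one ht0 ht1 m.succ_ne_zero) hx

section

variable {t x : ℝ} (ht0 : 0 ≤ t) (ht1 : t < 1) (hx : 0 ≤ x) (hxt : x * t < 1)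
include ht0 ht1 hx hxt

lemma mul_pow_succ_lt_one (m : ℕ) : x * t ^ (m + 1) < 1 :=
  (mul_pow_succ_le_mul ht0 ht1.le hx m).trans_lt hxt

lemma summable_factor_sub_one :
    Summable fun m : ℕ => (1 + x * t ^ (m + 1)) / (1 - x * t ^ (m + 1)) - 1 := by
  have hgeom := (summable_geometric_of_lt_one ht0 ht1).mul_left (2 * (x * t) / (1 - x * t))
  refine hgeom.of_nonneg_of_le (fun m => ?_) (fun m => ?_)
  · have := mul_pow_succ_lt_one ht0 ht1 hx hxt m
    rw [sub_nonneg, one_le_div (by linarith)]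
    linarith [show 0 ≤ x * t ^ (m + 1) by positivity]
  · have hyxt := mul_pow_succ_le_mul ht0 ht1.le hx m
    have hy : 1 - x * t ^ (m + 1) ≠ 0 := by linarith
    calc (1 + x * t ^ (m + 1)) / (1 - x * t ^ (m + 1)) - 1
        = 2 * (x * t ^ (m + 1)) / (1 - x * t ^ (m + 1)) := by
          field_simp
          ring
      _ ≤ 2 * (x * t ^ (m + 1)) / (1 - x * t) := by gcongr
      _ = 2 * (x * t) / (1 - x * t) * t ^ m := by ring

lemma hasSum_partitionWeight :
    HasSum (partitionWeight x t) (∏' m : ℕ, (1 + x * t ^ (m + 1)) / (1 - x * t ^ (m + 1))) := by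
  have h := hasSum_sigma_finset_pi_tprod_one_add
    (g := fun m (k : {k : ℕ // k ≠ 0}) => 2 * (x * t ^ (m + 1)) ^ (k : ℕ))
    (fun m k => by positivity)
    (fun m => hasSum_two_mul_pow_ne_zero (by positivity) (mul_pow_succ_lt_one ht0 ht1 hx hxt m))
    (summable_factor_sub_one ht0 ht1 hx hxt)
  simp only [add_sub_cancel] at h
  rw [← (multisetEquivSigmaCount ℕ).hasSum_iff] at h
  rw [← multisetEquivSigmaPartition.hasSum_iff]
  convert h using 1
  ext s
  simp only [Function.comp_apply, partitionWeight_multisetEquivSigmaPartition,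
    multisetEquivSigmaCount_snd]
  rw [prod_coe_sort ((multisetEquivSigmaCount ℕ s).1) fun i => 2 * (x * t ^ (i + 1)) ^ s.count i,
    multisetEquivSigmaCount_fst]

end

theorem partition_generating_function_refined
    (t x : ℝ) (ht0 : 0 < t) (ht1 : t < 1) (hx : 0 ≤ x) (hxt : x * t < 1) :
    Summable (fun n : ℕ =>
      (∑ lam : Nat.Partition n,
        (2 : ℝ) ^ lam.parts.toFinset.card * x ^ (Multiset.card lam.parts)) * t ^ n) ∧
    Multipliable (fun m : ℕ =>
      (1 + x * t ^ (m + 1)) / (1 - x * t ^ (m + 1))) ∧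
    ∑' n : ℕ,
        (∑ lam : Nat.Partition n,
          (2 : ℝ) ^ lam.parts.toFinset.card * x ^ (Multiset.card lam.parts)) * t ^ n =
      ∏' m : ℕ, (1 + x * t ^ (m + 1)) / (1 - x * t ^ (m + 1)) := by
  have h := (hasSum_partitionWeight ht0.le ht1 hx hxt).sigma fun n =>
    hasSum_fintype fun lam : n.Partition => partitionWeight x t ⟨n, lam⟩
  simp only [partitionWeight, ← sum_mul] at h
  have hprod := Real.multipliable_one_add_of_summable (summable_factor_sub_one ht0.le ht1 hx hxt)
  simp only [add_sub_cancel] at hprod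
  exact ⟨h.summable, hprod, h.tsum_eq⟩
end

section
/- Let L and A be finite additive abelian groups, let g ∈ ℕ, let μ : (Fin g → A) → ℂ and F : L ⊗[ℤ] A → ℂ be arbitrary functions. Then ∑_{c : Fin g → L} ∑_{f : Fin g → A} μ f · F(∑_{i : Fin g} (c i) ⊗ₜ (f i)) = ((card L)^g / card (L ⊗[ℤ] A)) · ∑_{ψ : AddChar (L ⊗[ℤ] A) ℂ} ( ∑_{f : Fin g → A, f i ∈ K_ψ for all i} μ f ) · ( ∑_{θ ∈ L ⊗[ℤ] A} F θ · ψ θ ), where K_ψ := {a ∈ A | ψ(l ⊗ₜ a) = 1 for all l ∈ L}. -/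
/-! Fourier-expand `F` over the characters of `L ⊗[ℤ] A`. For fixed `f`, the map
`c ↦ ∑ i, c i ⊗ₜ f i` is a homomorphism `(Fin g → L) →+ L ⊗[ℤ] A`, so averaging a character over
`c` gives `1` or `0` according as the character is trivial on its image, i.e. as every `f i` lies
in `K_ψ`; this is finite Poisson summation. Exchanging the sums over `f` and `ψ` gives the identity. -/

open Finset TensorProduct
open scoped Classical

namespace AddChar

variable {G H : Type*} [AddCommGroup G] [Fintype G] [AddGroup H] [Fintype H]

omit [Fintype G] in
lemma sum_apply_comp_addMonoidHom_eq_ite {R : Type*} [CommRing R] [IsDomain R]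
    (ψ : AddChar G R) (φ : H →+ G) :
    ∑ h, ψ (φ h) = if ∀ h, ψ (φ h) = 1 then (Fintype.card H : R) else 0 := by
  simpa [eq_zero_iff] using sum_eq_ite (ψ.compAddMonoidHom φ)

lemma fourier_inversion (F : G → ℂ) (x : G) :
    F x = (Fintype.card G : ℂ)⁻¹ * ∑ ψ : AddChar G ℂ, (∑ θ, F θ * ψ θ) * ψ (-x) := by
  have hG : (Fintype.card G : ℂ) ≠ 0 := Nat.cast_ne_zero.2 Fintype.card_ne_zero
  have orthogonality (θ : G) :
      ∑ ψ : AddChar G ℂ, ψ (θ - x) = if θ = x then (Fintype.card G : ℂ) else 0 := by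
    rw [sum_apply_eq_ite, sub_eq_zero]
  calc F x = (Fintype.card G : ℂ)⁻¹ * ∑ θ, F θ * ∑ ψ : AddChar G ℂ, ψ (θ - x) := by
        simp only [orthogonality, mul_ite, mul_zero, sum_ite_eq', mem_univ, if_true]
        field_simp
    _ = _ := by
        simp only [mul_sum, sum_mul, sub_eq_add_neg, map_add_eq_mul, mul_assoc]
        rw [sum_comm]

/-- Poisson summation along a homomorphism into a finite abelian group. -/
lemma sum_comp_addMonoidHom (φ : H →+ G) (F : G → ℂ) :
    ∑ h, F (φ h) = (Fintype.card H / Fintype.card G : ℂ) *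
      ∑ ψ ∈ univ.filter (fun ψ : AddChar G ℂ => ∀ h, ψ (φ h) = 1), ∑ θ, F θ * ψ θ := by
  have hneg (ψ : AddChar G ℂ) : ∑ h, ψ (-φ h) = ∑ h, ψ (φ h) :=
    Fintype.sum_equiv (Equiv.neg H) _ _ fun h => by simp
  calc ∑ h, F (φ h)
      = (Fintype.card G : ℂ)⁻¹ * ∑ ψ : AddChar G ℂ, (∑ θ, F θ * ψ θ) * ∑ h, ψ (φ h) := by
        simp_rw [fourier_inversion F (φ _), ← mul_sum]
        rw [sum_comm]
        simp_rw [← mul_sum, hneg]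
    _ = _ := by
        simp_rw [sum_apply_comp_addMonoidHom_eq_ite, sum_filter, mul_sum]
        refine sum_congr rfl fun ψ _ => ?_
        split_ifs <;> ring

end AddChar

namespace TensorProduct

variable {R L A ι : Type*} [CommSemiring R] [AddCommMonoid L] [AddCommMonoid A] [Module R L]
  [Module R A] [Fintype ι]

@[simps]
def sumTmulAddHom (f : ι → A) : (ι → L) →+ L ⊗[R] A where
  toFun c := ∑ i, c i ⊗ₜ f i
  map_zero' := by simp
  map_add' c c' := by simp [add_tmul, sum_add_distrib]

lemma forall_addChar_sum_tmul_eq_one_iff {M : Type*} [CommMonoid M]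
    (ψ : AddChar (L ⊗[R] A) M) (f : ι → A) :
    (∀ c : ι → L, ψ (∑ i, c i ⊗ₜ[R] f i) = 1) ↔ ∀ i (l : L), ψ (l ⊗ₜ[R] f i) = 1 := by
  classical
  refine ⟨fun h i l => ?_, fun h c => ?_⟩
  · simpa [Pi.single_apply, ite_tmul] using h (Pi.single i l)
  · exact sum_induction _ (ψ · = 1)
      (fun x y hx hy => by rw [AddChar.map_add_eq_mul, hx, hy, one_mul])
      (AddChar.map_zero_eq_one ψ) fun i _ => h i (c i)

end TensorProduct

theorem fourier_rewriting_of_boundary_sum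
    (L A : Type*) [AddCommGroup L] [AddCommGroup A] [Fintype L] [Fintype A]
    [Fintype (TensorProduct ℤ L A)]
    (g : ℕ) (μ : (Fin g → A) → ℂ) (F : TensorProduct ℤ L A → ℂ) :
    ∑ c : Fin g → L, ∑ f : Fin g → A,
        μ f * F (∑ i : Fin g, (c i) ⊗ₜ[ℤ] (f i)) =
      ((Fintype.card L : ℂ) ^ g / (Fintype.card (TensorProduct ℤ L A) : ℂ)) *
        ∑ ψ : AddChar (TensorProduct ℤ L A) ℂ,
          (∑ f ∈ Finset.univ.filter
              (fun f : Fin g → A => ∀ i, ∀ l : L, ψ (l ⊗ₜ[ℤ] (f i)) = 1), μ f) *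
          (∑ θ : TensorProduct ℤ L A, F θ * ψ θ) := by
  calc _ = ∑ f : Fin g → A, μ f * ∑ c, F (sumTmulAddHom f c) := by
        rw [sum_comm]
        simp_rw [mul_sum, sumTmulAddHom_apply]
    _ = ((Fintype.card L : ℂ) ^ g / Fintype.card (L ⊗[ℤ] A)) * ∑ f : Fin g → A,
          ∑ ψ ∈ univ.filter (fun ψ : AddChar (L ⊗[ℤ] A) ℂ => ∀ i, ∀ l : L, ψ (l ⊗ₜ[ℤ] f i) = 1),
            μ f * ∑ θ, F θ * ψ θ := by
        simp_rw [AddChar.sum_comp_addMonoidHom, sumTmulAddHom_apply,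
          forall_addChar_sum_tmul_eq_one_iff, Fintype.card_fun, Fintype.card_fin, Nat.cast_pow,
          mul_sum, mul_left_comm]
    _ = _ := by
        simp only [sum_filter, sum_mul, ite_mul, zero_mul]
        rw [sum_comm]
end
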